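/- Let n = 2 and let f : ℝ² → ℝ be of class C² in a neighborhood of x̄ = (x̄₁, x̄₂) with positive coordinates, suppose p̄ᵢ + λ̄·∂f/∂xᵢ(x̄) = 0 for i = 1, 2 with p̄ having positive coordinates, f(x̄) = ȳ, and the determinant of the bordered Hessian of f at x̄ is nonzero. Let C(p, y) = p₁x₁(p,y) + p₂x₂(p,y) be the cost function built from the local critical-point map, and suppose ∂²C/∂p₁∂p₂(p̄, ȳ) ≠ 0 and ∂C/∂p₁(p̄, ȳ), ∂C/∂p₂(p̄, ȳ) are nonzero. Then σ^H_f(x̄) · σ^H_C(p̄, ȳ) = 1, where σ^H_f(x̄) = ((x̄₁f₁ + x̄₂f₂)/(x̄₁x̄₂)) · f₁f₂/(−f₁₁f₂² + 2f₁₂f₁f₂ − f₂₂f₁²) evaluated at x̄, and σ^H_C(p̄, ȳ) = C₁·C₂/(C·C₁₂) evaluated at (p̄, ȳ) (subscripts denoting partial derivatives of C with respect to p₁, p₂). -/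

import Mathlib

/-- Partial derivative of `f : ℝⁿ → ℝ` with respect to the `i`-th variable. -/
noncomputable def pderiv1 (n : ℕ) (f : (Fin n → ℝ) → ℝ) (i : Fin n) (x : Fin n → ℝ) : ℝ :=
  fderiv ℝ f x (Pi.single i 1)

/-- Second partial derivative `f_{ij}` of `f : ℝⁿ → ℝ`. -/
noncomputable def pderiv2 (n : ℕ) (f : (Fin n → ℝ) → ℝ) (i j : Fin n) (x : Fin n → ℝ) : ℝ :=
  pderiv1 n (pderiv1 n f j) i x

/-- The bordered Hessian of `f` at `x`: the `(n+1) × (n+1)` matrix with `(0,0)` entry `0`,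
the rest of row 0 and column 0 given by the gradient of `f`, and lower-right `n × n`
block the Hessian of `f`. -/
noncomputable def borderedHessian (n : ℕ) (f : (Fin n → ℝ) → ℝ) (x : Fin n → ℝ) :
    Matrix (Fin (n + 1)) (Fin (n + 1)) ℝ :=
  Matrix.of fun i j =>
    Fin.cases
      (Fin.cases (0 : ℝ) (fun j' => pderiv1 n f j' x) j)
      (fun i' => Fin.cases (pderiv1 n f i' x) (fun j' => pderiv2 n f i' j' x) j) i

/-- The cofactor of the `(i,j)` entry of an `(m+1) × (m+1)` real matrix. -/
noncomputable def cofactor {m : ℕ} (M : Matrix (Fin (m + 1)) (Fin (m + 1)) ℝ)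
    (i j : Fin (m + 1)) : ℝ :=
  (-1 : ℝ) ^ ((i : ℕ) + (j : ℕ)) * (M.submatrix i.succAbove j.succAbove).det

/-- The Allen elasticity of substitution of factors `i` and `j` at `x`. -/
noncomputable def AES (n : ℕ) (f : (Fin n → ℝ) → ℝ) (x : Fin n → ℝ) (i j : Fin n) : ℝ :=
  ((∑ k, x k * pderiv1 n f k x) / (x i * x j)) *
    (cofactor (borderedHessian n f x) i.succ j.succ / (borderedHessian n f x).det)

open Filter

open Topology

/-!
By the envelope theorem (Shephard's lemma) `∂C/∂pⱼ = xⱼ(p, y)`, so `C₁₂ = ∂x₁/∂p₂` and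
`C₁ C₂ = x₁ x₂`. Differentiating the first-order conditions `pᵢ + λ fᵢ(x) = 0`, `f(x) = y` in `p₂`
gives a linear system for `(∂λ/∂p₂, ∂x/∂p₂)` whose matrix is the bordered Hessian with the Hessian
block scaled by `λ`; Cramer's rule yields `λ · det H · ∂x₁/∂p₂ = -f₁ f₂`, and `det H` is exactly the
denominator of `σ^H_f`. Since moreover `C = p · x = -λ (x · ∇f)`, the two elasticities are
reciprocal.
-/

theorem fderiv_apply_eq_sum_mul_pderiv1 {n : ℕ} (g : (Fin n → ℝ) → ℝ) (x w : Fin n → ℝ) :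
    fderiv ℝ g x w = ∑ k, w k * pderiv1 n g k x := by
  conv_lhs => rw [← Finset.univ_sum_single w]
  refine (map_sum _ _ _).trans (Finset.sum_congr rfl fun k _ => ?_)
  rw [pderiv1, ← smul_eq_mul, ← map_smul, ← Pi.single_smul', smul_eq_mul, mul_one]

theorem differentiableAt_pderiv1 {n : ℕ} {f : (Fin n → ℝ) → ℝ} {x : Fin n → ℝ}
    (hf : ContDiffAt ℝ 2 f x) (i : Fin n) : DifferentiableAt ℝ (pderiv1 n f i) x :=
  ((hf.fderiv_right (m := 1) (by norm_num)).differentiableAt one_ne_zero).clm_apply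
    (differentiableAt_const _)

theorem pderiv2_comm {n : ℕ} {f : (Fin n → ℝ) → ℝ} {x : Fin n → ℝ}
    (hf : ContDiffAt ℝ 2 f x) (i j : Fin n) : pderiv2 n f i j x = pderiv2 n f j i x := by
  have hdf : DifferentiableAt ℝ (fderiv ℝ f) x :=
    (hf.fderiv_right (m := 1) (by norm_num)).differentiableAt one_ne_zero
  have hsecond (i j : Fin n) :
      pderiv2 n f i j x = fderiv ℝ (fderiv ℝ f) x (Pi.single i 1) (Pi.single j 1) := by
    change fderiv ℝ (fun y => fderiv ℝ f y (Pi.single j 1)) x (Pi.single i 1) = _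
    simp [fderiv_clm_apply hdf (differentiableAt_const _)]
  rw [hsecond, hsecond, hf.isSymmSndFDerivAt (by simp [minSmoothness_of_isRCLikeNormedField])]

theorem borderedHessian_two (f : (Fin 2 → ℝ) → ℝ) (x : Fin 2 → ℝ) :
    borderedHessian 2 f x =
      !![0, pderiv1 2 f 0 x, pderiv1 2 f 1 x;
        pderiv1 2 f 0 x, pderiv2 2 f 0 0 x, pderiv2 2 f 0 1 x;
        pderiv1 2 f 1 x, pderiv2 2 f 1 0 x, pderiv2 2 f 1 1 x] := by
  ext i j
  fin_cases i <;> fin_cases j <;> rfl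

theorem det_borderedHessian_two {f : (Fin 2 → ℝ) → ℝ} {x : Fin 2 → ℝ}
    (hf : ContDiffAt ℝ 2 f x) :
    (borderedHessian 2 f x).det =
      -pderiv2 2 f 0 0 x * pderiv1 2 f 1 x ^ 2
        + 2 * pderiv2 2 f 0 1 x * pderiv1 2 f 0 x * pderiv1 2 f 1 x
        - pderiv2 2 f 1 1 x * pderiv1 2 f 0 x ^ 2 := by
  rw [borderedHessian_two, Matrix.det_fin_three, pderiv2_comm hf 1 0]
  simp only [Matrix.of_apply, Matrix.cons_val', Matrix.cons_val_zero, Matrix.cons_val_one,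
    Matrix.cons_val, Matrix.cons_val_fin_one]
  ring

/-- Critical points `(λ, x)` of the Lagrangian `p ⬝ x + λ (f x - y)`. -/
def IsLagrangeCritical {n : ℕ} (f : (Fin n → ℝ) → ℝ) (py : (Fin n → ℝ) × ℝ)
    (lx : ℝ × (Fin n → ℝ)) : Prop :=
  (∀ i, py.1 i + lx.1 * pderiv1 n f i lx.2 = 0) ∧ f lx.2 = py.2

def cost {n : ℕ} (φ : (Fin n → ℝ) × ℝ → ℝ × (Fin n → ℝ)) (py : (Fin n → ℝ) × ℝ) : ℝ :=
  ∑ k, py.1 k * (φ py).2 k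

section LagrangeCritical

variable {n : ℕ} {f : (Fin n → ℝ) → ℝ} {φ : (Fin n → ℝ) × ℝ → ℝ × (Fin n → ℝ)}
  {z : (Fin n → ℝ) × ℝ}

theorem hasFDerivAt_fst_apply (k : Fin n) :
    HasFDerivAt (fun w : (Fin n → ℝ) × ℝ => w.1 k)
      ((ContinuousLinearMap.proj k).comp (ContinuousLinearMap.fst ℝ _ ℝ)) z :=
  hasFDerivAt_pi'.1 hasFDerivAt_fst k

theorem hasFDerivAt_snd_apply (hφ : DifferentiableAt ℝ φ z) (k : Fin n) :
    HasFDerivAt (fun w => (φ w).2 k)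
      ((ContinuousLinearMap.proj k).comp ((ContinuousLinearMap.snd ℝ ℝ _).comp (fderiv ℝ φ z)))
      z :=
  hasFDerivAt_pi'.1 hφ.hasFDerivAt.snd k

theorem sum_fderiv_mul_pderiv1_eq_snd (hφ : DifferentiableAt ℝ φ z)
    (hf : DifferentiableAt ℝ f (φ z).2) (hcon : ∀ᶠ w in 𝓝 z, f (φ w).2 = w.2)
    (v : (Fin n → ℝ) × ℝ) :
    ∑ k, (fderiv ℝ φ z v).2 k * pderiv1 n f k (φ z).2 = v.2 := by
  have hcomp := (hf.hasFDerivAt.comp z hφ.hasFDerivAt.snd).congr_of_eventuallyEq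
    (hcon.mono fun w hw => hw.symm)
  rw [← fderiv_apply_eq_sum_mul_pderiv1]
  exact congrArg (· v) (hcomp.unique hasFDerivAt_snd)

theorem fderiv_cost_apply (hφ : DifferentiableAt ℝ φ z) (hf : DifferentiableAt ℝ f (φ z).2)
    (hcrit : ∀ᶠ w in 𝓝 z, IsLagrangeCritical f w (φ w)) (v : (Fin n → ℝ) × ℝ) :
    fderiv ℝ (cost φ) z v = ∑ k, v.1 k * (φ z).2 k - (φ z).1 * v.2 := by
  have hcost : HasFDerivAt (cost φ) (∑ k, _) z :=
    HasFDerivAt.fun_sum fun k _ => (hasFDerivAt_fst_apply k).fun_mul (hasFDerivAt_snd_apply hφ k)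
  have hcon := sum_fderiv_mul_pderiv1_eq_snd hφ hf (hcrit.mono fun w hw => hw.2) v
  rw [hcost.fderiv, _root_.sum_apply, ← hcon, Finset.mul_sum, ← Finset.sum_sub_distrib]
  refine Finset.sum_congr rfl fun k _ => ?_
  have hstat := hcrit.self_of_nhds.1 k
  simp only [add_apply, smul_apply, ContinuousLinearMap.comp_apply, ContinuousLinearMap.coe_snd',
    ContinuousLinearMap.proj_apply, smul_eq_mul, ContinuousLinearMap.coe_fst']
  linear_combination (fderiv ℝ φ z v).2 k * hstat

theorem fderiv_cost_single (hφ : DifferentiableAt ℝ φ z) (hf : DifferentiableAt ℝ f (φ z).2)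
    (hcrit : ∀ᶠ w in 𝓝 z, IsLagrangeCritical f w (φ w)) (j : Fin n) :
    fderiv ℝ (cost φ) z (Pi.single j 1, 0) = (φ z).2 j := by
  rw [fderiv_cost_apply hφ hf hcrit]
  simp [Pi.single_apply]

theorem fderiv_cost_single_eventuallyEq (hφ : ∀ᶠ w in 𝓝 z, DifferentiableAt ℝ φ w)
    (hf : ∀ᶠ x in 𝓝 (φ z).2, DifferentiableAt ℝ f x)
    (hcrit : ∀ᶠ w in 𝓝 z, IsLagrangeCritical f w (φ w)) (j : Fin n) :
    (fun w => fderiv ℝ (cost φ) w (Pi.single j 1, 0)) =ᶠ[𝓝 z] fun w => (φ w).2 j := by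
  have hfφ : ∀ᶠ w in 𝓝 z, DifferentiableAt ℝ f (φ w).2 :=
    hφ.self_of_nhds.continuousAt.snd.eventually hf
  filter_upwards [hφ, hfφ, hcrit.eventually_nhds] with w hφw hfw hcritw
  exact fderiv_cost_single hφw hfw hcritw j

theorem fderiv_fderiv_cost_single_apply (hφ : ∀ᶠ w in 𝓝 z, DifferentiableAt ℝ φ w)
    (hf : ∀ᶠ x in 𝓝 (φ z).2, DifferentiableAt ℝ f x)
    (hcrit : ∀ᶠ w in 𝓝 z, IsLagrangeCritical f w (φ w)) (j : Fin n) (v : (Fin n → ℝ) × ℝ) :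
    fderiv ℝ (fun w => fderiv ℝ (cost φ) w (Pi.single j 1, 0)) z v = (fderiv ℝ φ z v).2 j := by
  rw [(fderiv_cost_single_eventuallyEq hφ hf hcrit j).fderiv_eq,
    (hasFDerivAt_snd_apply hφ.self_of_nhds j).fderiv]
  rfl

theorem fderiv_stationarity_apply (hφ : DifferentiableAt ℝ φ z) {i : Fin n}
    (hfi : DifferentiableAt ℝ (pderiv1 n f i) (φ z).2)
    (hcrit : ∀ᶠ w in 𝓝 z, IsLagrangeCritical f w (φ w)) (v : (Fin n → ℝ) × ℝ) :
    v.1 i + (fderiv ℝ φ z v).1 * pderiv1 n f i (φ z).2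
      + (φ z).1 * ∑ k, (fderiv ℝ φ z v).2 k * pderiv2 n f k i (φ z).2 = 0 := by
  have hstat := ((hasFDerivAt_fst_apply i).fun_add (hφ.hasFDerivAt.fst.fun_mul
    (hfi.hasFDerivAt.comp z hφ.hasFDerivAt.snd))).congr_of_eventuallyEq
    (hcrit.mono fun w hw => (hw.1 i).symm)
  have hzero := congrArg (· v) (hstat.unique (hasFDerivAt_const 0 z))
  simp only [add_apply, smul_apply, ContinuousLinearMap.comp_apply, ContinuousLinearMap.coe_snd',
    ContinuousLinearMap.proj_apply, smul_eq_mul, ContinuousLinearMap.coe_fst',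
    zero_apply, Function.comp_apply, fderiv_apply_eq_sum_mul_pderiv1 (pderiv1 n f i)] at hzero
  simp only [pderiv2]
  linear_combination hzero

end LagrangeCritical

theorem lagrange_mul_det_borderedHessian_mul_fderiv {f : (Fin 2 → ℝ) → ℝ}
    {φ : (Fin 2 → ℝ) × ℝ → ℝ × (Fin 2 → ℝ)} {z : (Fin 2 → ℝ) × ℝ}
    (hφ : DifferentiableAt ℝ φ z) (hf : ContDiffAt ℝ 2 f (φ z).2)
    (hcrit : ∀ᶠ w in 𝓝 z, IsLagrangeCritical f w (φ w)) :
    (φ z).1 * (borderedHessian 2 f (φ z).2).det * (fderiv ℝ φ z (Pi.single 1 1, 0)).2 0 =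
      -(pderiv1 2 f 0 (φ z).2 * pderiv1 2 f 1 (φ z).2) := by
  have h0 := fderiv_stationarity_apply hφ (differentiableAt_pderiv1 hf 0) hcrit (Pi.single 1 1, 0)
  have h1 := fderiv_stationarity_apply hφ (differentiableAt_pderiv1 hf 1) hcrit (Pi.single 1 1, 0)
  have hcon := sum_fderiv_mul_pderiv1_eq_snd hφ (hf.differentiableAt (by norm_num))
    (hcrit.mono fun w hw => hw.2) (Pi.single 1 1, 0)
  simp only [Fin.sum_univ_two, pderiv2_comm hf 1 0, Pi.single_eq_same,
    Pi.single_eq_of_ne zero_ne_one, zero_add] at h0 h1 hcon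
  rw [det_borderedHessian_two hf]
  linear_combination (-pderiv1 2 f 1 (φ z).2 ^ 2) * h0
    + (pderiv1 2 f 0 (φ z).2 * pderiv1 2 f 1 (φ z).2) * h1
    - (φ z).1 * (pderiv1 2 f 0 (φ z).2 * pderiv2 2 f 1 1 (φ z).2
      - pderiv1 2 f 1 (φ z).2 * pderiv2 2 f 0 1 (φ z).2) * hcon

theorem hicks_product_eq_one {x p F : Fin 2 → ℝ} {l D b : ℝ} (hx : ∀ i, 0 < x i)
    (hp : ∀ i, 0 < p i) (hstat : ∀ i, p i + l * F i = 0) (hD : D ≠ 0)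
    (hb : l * D * b = -(F 0 * F 1)) :
    (x 0 * F 0 + x 1 * F 1) / (x 0 * x 1) * (F 0 * F 1 / D) *
      (x 0 * x 1 / ((p 0 * x 0 + p 1 * x 1) * b)) = 1 := by
  have hcost : p 0 * x 0 + p 1 * x 1 = -(l * (x 0 * F 0 + x 1 * F 1)) := by
    linear_combination x 0 * hstat 0 + x 1 * hstat 1
  have hcost_ne : p 0 * x 0 + p 1 * x 1 ≠ 0 := by
    have := hx 0; have := hx 1; have := hp 0; have := hp 1; positivity
  obtain ⟨hl, hS⟩ := mul_ne_zero_iff.1 (neg_ne_zero.1 (hcost ▸ hcost_ne))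
  have hF (i : Fin 2) : F i ≠ 0 := fun h => (hp i).ne' (by simpa [h] using hstat i)
  have hb0 : b ≠ 0 := by
    rintro rfl
    exact mul_ne_zero (hF 0) (hF 1) (by linarith)
  have hx0 : x 0 ≠ 0 := (hx 0).ne'
  have hx1 : x 1 ≠ 0 := (hx 1).ne'
  rw [hcost]
  field_simp
  linear_combination -hb

theorem HES_production_cost_reciprocal_general (f : (Fin 2 → ℝ) → ℝ)
    (xbar pbar : Fin 2 → ℝ) (lbar ybar : ℝ)
    (hxpos : ∀ i, 0 < xbar i) (hppos : ∀ i, 0 < pbar i)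
    (hC2 : ∀ᶠ z in nhds xbar, ContDiffAt ℝ 2 f z)
    (hcrit : ∀ i, pbar i + lbar * pderiv1 2 f i xbar = 0)
    (hout : f xbar = ybar)
    (hF : (borderedHessian 2 f xbar).det ≠ 0)
    (V : Set ((Fin 2 → ℝ) × ℝ)) (W : Set (ℝ × (Fin 2 → ℝ)))
    (φ : (Fin 2 → ℝ) × ℝ → ℝ × (Fin 2 → ℝ))
    (hV : IsOpen V)
    (hVmem : (pbar, ybar) ∈ V) (hWmem : (lbar, xbar) ∈ W)
    (hφ : ContDiffOn ℝ 1 φ V) (hmaps : Set.MapsTo φ V W)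
    (huniq : ∀ p y, (p, y) ∈ V → ∀ l x, (l, x) ∈ W →
      (((∀ i, p i + l * pderiv1 2 f i x = 0) ∧ f x = y) ↔ (l, x) = φ (p, y)))
    (C : (Fin 2 → ℝ) × ℝ → ℝ)
    (hC : ∀ z, C z = z.1 0 * (φ z).2 0 + z.1 1 * (φ z).2 1) :
    (((xbar 0 * pderiv1 2 f 0 xbar + xbar 1 * pderiv1 2 f 1 xbar) / (xbar 0 * xbar 1)) *
        (pderiv1 2 f 0 xbar * pderiv1 2 f 1 xbar /
          (-(pderiv2 2 f 0 0 xbar) * (pderiv1 2 f 1 xbar) ^ 2 +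
            2 * pderiv2 2 f 0 1 xbar * pderiv1 2 f 0 xbar * pderiv1 2 f 1 xbar -
            pderiv2 2 f 1 1 xbar * (pderiv1 2 f 0 xbar) ^ 2))) *
      (fderiv ℝ C (pbar, ybar) (Pi.single 0 1, 0) *
          fderiv ℝ C (pbar, ybar) (Pi.single 1 1, 0) /
        (C (pbar, ybar) *
          fderiv ℝ (fun z => fderiv ℝ C z (Pi.single 0 1, 0)) (pbar, ybar)
            (Pi.single 1 1, 0))) = 1 := by
  obtain rfl : C = cost φ := funext fun z => by simp [hC, cost, Fin.sum_univ_two]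
  have hφ0 : φ (pbar, ybar) = (lbar, xbar) := ((huniq _ _ hVmem _ _ hWmem).1 ⟨hcrit, hout⟩).symm
  have hcritφ : ∀ᶠ z in 𝓝 (pbar, ybar), IsLagrangeCritical f z (φ z) :=
    eventually_of_mem (hV.mem_nhds hVmem) fun z hz => (huniq _ _ hz _ _ (hmaps hz)).2 rfl
  have hφd : ∀ᶠ z in 𝓝 (pbar, ybar), DifferentiableAt ℝ φ z :=
    eventually_of_mem (hV.mem_nhds hVmem) fun z hz =>
      (hφ.contDiffAt (hV.mem_nhds hz)).differentiableAt one_ne_zero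
  have hf : ∀ᶠ x in 𝓝 (φ (pbar, ybar)).2, ContDiffAt ℝ 2 f x := by rwa [hφ0]
  have hfd := hf.mono fun x hx => hx.differentiableAt two_ne_zero
  have hcramer :=
    lagrange_mul_det_borderedHessian_mul_fderiv hφd.self_of_nhds hf.self_of_nhds hcritφ
  rw [fderiv_cost_single hφd.self_of_nhds hfd.self_of_nhds hcritφ,
    fderiv_cost_single hφd.self_of_nhds hfd.self_of_nhds hcritφ,
    fderiv_fderiv_cost_single_apply hφd hfd hcritφ, cost, Fin.sum_univ_two, hφ0,
    ← det_borderedHessian_two hC2.self_of_nhds]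
  rw [hφ0] at hcramer
  exact hicks_product_eq_one hxpos hppos hcrit hF hcramer

/-- **relation between the Hicks ES of the production function and of the
cost function, `n = 2`.** `σ^H_f(x̄) · σ^H_C(p̄,ȳ) = 1`. -/
theorem HES_production_cost_reciprocal (f : (Fin 2 → ℝ) → ℝ)
    (xbar pbar : Fin 2 → ℝ) (lbar ybar : ℝ)
    (hxpos : ∀ i, 0 < xbar i) (hppos : ∀ i, 0 < pbar i)
    (hC2 : ∀ᶠ z in nhds xbar, ContDiffAt ℝ 2 f z)
    (hcrit : ∀ i, pbar i + lbar * pderiv1 2 f i xbar = 0)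
    (hout : f xbar = ybar)
    (hF : (borderedHessian 2 f xbar).det ≠ 0)
    (V : Set ((Fin 2 → ℝ) × ℝ)) (W : Set (ℝ × (Fin 2 → ℝ)))
    (φ : (Fin 2 → ℝ) × ℝ → ℝ × (Fin 2 → ℝ))
    (hV : IsOpen V) (hW : IsOpen W)
    (hVmem : (pbar, ybar) ∈ V) (hWmem : (lbar, xbar) ∈ W)
    (hφ : ContDiffOn ℝ 1 φ V) (hmaps : Set.MapsTo φ V W)
    (huniq : ∀ p y, (p, y) ∈ V → ∀ l x, (l, x) ∈ W →
      (((∀ i, p i + l * pderiv1 2 f i x = 0) ∧ f x = y) ↔ (l, x) = φ (p, y)))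
    (C : (Fin 2 → ℝ) × ℝ → ℝ)
    (hC : ∀ z, C z = z.1 0 * (φ z).2 0 + z.1 1 * (φ z).2 1)
    (hC1 : fderiv ℝ C (pbar, ybar) (Pi.single 0 1, 0) ≠ 0)
    (hC2' : fderiv ℝ C (pbar, ybar) (Pi.single 1 1, 0) ≠ 0)
    (hC12 : fderiv ℝ (fun z => fderiv ℝ C z (Pi.single 0 1, 0)) (pbar, ybar)
      (Pi.single 1 1, 0) ≠ 0) :
    (((xbar 0 * pderiv1 2 f 0 xbar + xbar 1 * pderiv1 2 f 1 xbar) / (xbar 0 * xbar 1)) *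
        (pderiv1 2 f 0 xbar * pderiv1 2 f 1 xbar /
          (-(pderiv2 2 f 0 0 xbar) * (pderiv1 2 f 1 xbar) ^ 2 +
            2 * pderiv2 2 f 0 1 xbar * pderiv1 2 f 0 xbar * pderiv1 2 f 1 xbar -
            pderiv2 2 f 1 1 xbar * (pderiv1 2 f 0 xbar) ^ 2))) *
      (fderiv ℝ C (pbar, ybar) (Pi.single 0 1, 0) *
          fderiv ℝ C (pbar, ybar) (Pi.single 1 1, 0) /
        (C (pbar, ybar) *
          fderiv ℝ (fun z => fderiv ℝ C z (Pi.single 0 1, 0)) (pbar, ybar)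
            (Pi.single 1 1, 0))) = 1 :=
  HES_production_cost_reciprocal_general f xbar pbar lbar ybar hxpos hppos hC2 hcrit hout hF V W φ
    hV hVmem hWmem hφ hmaps huniq C hC
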